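/- arXiv:2207.07582 — 2 statements merged into one kernel-verified Lean document; each statement's English description precedes it below -/
import Mathlib

section
/- Let b > 0 be a real number, θ ∈ ℝ a direction, and Z a distribution of points on ℂ. Then the exponential system Exp^Z is complete in Hol(D) for every convex domain D ⊆ ℂ whose width in direction θ satisfies width_D(θ) ≤ b, if and only if Exp^Z is complete in the Banach space C(K) ∩ Hol(int K) for every convex compact set K ⊆ ℂ whose width in direction θ satisfies width_K(θ) < b. -/
/-!
A compact subset `K` of a convex domain `D` lies in the compact convex set
`closure (convexHull K) ⊆ D`, whose width in direction `θ` is strictly smaller than that of `D`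
because `D` is open: `K` can be pushed by some `δ > 0` in both directions `±e^{iθ}` without
leaving `D`.

Conversely, a function in `C(K) ∩ Hol(int K)` is uniformly close on `K` to a function holomorphic
on an open convex neighbourhood `U` of `K`: compose it with a contraction of `K` into its interior,
or, when `K` has empty interior and hence is a segment, use Weierstrass approximation along it.
Intersecting `U` with an open slab of width `b` around `K` gives a convex domain to which the
hypothesis applies.
-/

open Complex Filter Set
open scoped ENNReal ENat

noncomputable section

/-- The exponential system `Exp^Z` of a distribution of points `Z` on `ℂ`:
the functions `w ↦ w^p e^{z w}` for each value `z` occurring in `Z` with multiplicity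
`m(z)`, with `p = 0, 1, …, m(z) − 1`. -/
def expSystem (Z : ℕ → ℂ) : Set (ℂ → ℂ) :=
  {f | ∃ z : ℂ, ∃ p : ℕ, (p : ℕ∞) < {n : ℕ | Z n = z}.encard ∧
    f = fun w => w ^ p * Complex.exp (z * w)}

/-- Completeness of the family `F` in `Hol(D)`: every holomorphic function on `D`
can be approximated, uniformly on each compact subset of `D` and to any accuracy,
by finite linear combinations of members of `F`. -/
def CompleteHol (F : Set (ℂ → ℂ)) (D : Set ℂ) : Prop :=
  ∀ f : ℂ → ℂ, DifferentiableOn ℂ f D →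
    ∀ K : Set ℂ, K ⊆ D → IsCompact K → ∀ ε : ℝ, 0 < ε →
      ∃ g ∈ Submodule.span ℂ F, ∀ z ∈ K, ‖f z - g z‖ < ε

/-- Completeness of the family `F` in the Banach space `C(K) ∩ Hol(int K)`
with the sup-norm on `K`. -/
def CompleteCK (F : Set (ℂ → ℂ)) (K : Set ℂ) : Prop :=
  ∀ f : ℂ → ℂ, ContinuousOn f K → DifferentiableOn ℂ f (interior K) →
    ∀ ε : ℝ, 0 < ε → ∃ g ∈ Submodule.span ℂ F, ∀ z ∈ K, ‖f z - g z‖ < ε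

/-- Completeness of the family `F` in the space `C(A) ∩ Hol(O)` of functions continuous
on `A` and holomorphic on `O`, with the topology of uniform convergence on compact
subsets of `A`. -/
def CompleteClOp (F : Set (ℂ → ℂ)) (A O : Set ℂ) : Prop :=
  ∀ f : ℂ → ℂ, ContinuousOn f A → DifferentiableOn ℂ f O →
    ∀ K : Set ℂ, K ⊆ A → IsCompact K → ∀ ε : ℝ, 0 < ε →
      ∃ g ∈ Submodule.span ℂ F, ∀ z ∈ K, ‖f z - g z‖ < ε

/-- Width of `S ⊆ ℂ` in direction `θ`:
`width_S(θ) = sup{Re((z−w)e^{−iθ}) : z, w ∈ S}` (with `sup ∅ = −∞`). -/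
def dirWidth (S : Set ℂ) (θ : ℝ) : EReal :=
  ⨆ z ∈ S, ⨆ w ∈ S, ((((z - w) * Complex.exp (-(θ : ℂ) * Complex.I)).re : ℝ) : EReal)

/-- The open strip `S_{b/2} = {z : |Im z| < b/2}` of width `b`. -/
def openStrip (b : ℝ) : Set ℂ := {z : ℂ | |z.im| < b / 2}

/-- The closed strip `S̄_{b/2} = {z : |Im z| ≤ b/2}` of width `b`. -/
def closedStrip (b : ℝ) : Set ℂ := {z : ℂ | |z.im| ≤ b / 2}

/-- Rotation `e^{iφ}S` of a set `S ⊆ ℂ`. -/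
def rotSet (φ : ℝ) (S : Set ℂ) : Set ℂ := (fun z => Complex.exp ((φ : ℂ) * Complex.I) * z) '' S

/-- Rotation `e^{iφ}Z` of a distribution of points `Z`. -/
def rotSeq (φ : ℝ) (Z : ℕ → ℂ) : ℕ → ℂ := fun n => Complex.exp ((φ : ℂ) * Complex.I) * Z n

/-- Upper density `dens⁺(Z) = limsup_{r→+∞} n_Z(r)/r` where `n_Z(r) = #{n : |z_n| ≤ r}`. -/
def upperDensity (Z : ℕ → ℂ) : ℝ≥0∞ :=
  Filter.limsup
    (fun r : ℝ => ({n : ℕ | ‖Z n‖ ≤ r}.encard : ℝ≥0∞) / ENNReal.ofReal r)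
    Filter.atTop

/-- Right logarithmic measure `ℓ_W(r,R) = Σ_{r<|w_n|≤R} max(Re(1/w_n), 0)`. -/
def rightLogMeasure (W : ℕ → ℂ) (r R : ℝ) : ℝ≥0∞ :=
  ∑' n : ℕ, Set.indicator {n : ℕ | r < ‖W n‖ ∧ ‖W n‖ ≤ R}
    (fun n => ENNReal.ofReal (max (1 / W n).re 0)) n

/-- Logarithmic submeasure `𝓛_W(r,R) = max(ℓ_W(r,R), ℓ_{−W}(r,R))`. -/
def logSubmeasure (W : ℕ → ℂ) (r R : ℝ) : ℝ≥0∞ :=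
  max (rightLogMeasure W r R) (rightLogMeasure (fun n => -W n) r R)

/-- A family `(w_i)` of complex numbers has finite Redheffer exterior density if there are
`c ≥ 0` and pairwise distinct integers `m_i` with `Σ_i |1/w_i − c/m_i| < +∞`. -/
def HasFinRedheffer {ι : Type*} (w : ι → ℂ) : Prop :=
  ∃ c : ℝ, 0 ≤ c ∧ ∃ m : ι → ℤ, Function.Injective m ∧
    Summable (fun i => ‖1 / w i - (c : ℂ) / (m i : ℂ)‖)

/-- `Z` has finite Redheffer exterior density near the direction `θ`. -/
def FinRedhefferNear (Z : ℕ → ℂ) (θ : ℝ) : Prop :=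
  ∃ a : ℝ, 0 < a ∧ a ≤ Real.pi / 2 ∧
    HasFinRedheffer (fun n : {n : ℕ // |Complex.arg (Z n) - θ| < a} =>
      Complex.exp (-(θ : ℂ) * Complex.I) * Z n.1)

/-- Logarithmic block-density `ln-dens(W)` of a distribution of points `W`. -/
def lnDensZ (W : ℕ → ℂ) : EReal :=
  Filter.limsup (fun a : ℝ => ((1 / Real.log a : ℝ) : EReal) *
    Filter.limsup (fun r : ℝ => ((logSubmeasure W r (a * r) : ℝ≥0∞) : EReal)) Filter.atTop)
    Filter.atTop

/-- Breadth of a set: the least width over all directions. -/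
def breadth (S : Set ℂ) : EReal := ⨅ θ : ℝ, dirWidth S θ

/-- Support function `h_S(θ) = sup_{s∈S} Re(s e^{−iθ})`. -/
def suppFn (S : Set ℂ) (θ : ℝ) : EReal :=
  ⨆ s ∈ S, (((s * Complex.exp (-(θ : ℂ) * Complex.I)).re : ℝ) : EReal)

/-- Homogeneous support function `H_S(z) = sup_{s∈S} Re(s·conj z)`. -/
def suppFnH (S : Set ℂ) (z : ℂ) : EReal :=
  ⨆ s ∈ S, (((s * (starRingEnd ℂ) z).re : ℝ) : EReal)

/-- A logarithmic submeasure of intervals: a positive function of intervals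
`(r,R] ⊆ (0,+∞)` with logarithmic growth and subadditivity. -/
def IsLogSubmeasure (ℓ : ℝ → ℝ → ℝ) : Prop :=
  (∀ r R : ℝ, 0 < r → r < R → 0 ≤ ℓ r R) ∧
  (∃ M : ℝ, ∀ r : ℝ, 0 < r → ℓ r (2 * r) ≤ M) ∧
  (∀ r₁ r₂ r₃ : ℝ, 0 < r₁ → r₁ < r₂ → r₂ < r₃ → ℓ r₁ r₃ ≤ ℓ r₁ r₂ + ℓ r₂ r₃)

def dirProj (θ : ℝ) : ℂ →ₗ[ℝ] ℝ where
  toFun z := (z * Complex.exp (-(θ : ℂ) * Complex.I)).re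
  map_add' z w := by rw [add_mul, add_re]
  map_smul' t z := by simp only [real_smul, mul_assoc, re_ofReal_mul, RingHom.id_apply, smul_eq_mul]

lemma dirProj_apply (θ : ℝ) (z : ℂ) : dirProj θ z = (z * Complex.exp (-(θ : ℂ) * Complex.I)).re :=
  rfl

lemma continuous_dirProj (θ : ℝ) : Continuous (dirProj θ) :=
  LinearMap.continuous_of_finiteDimensional _

lemma dirProj_exp_mul_I (θ : ℝ) : dirProj θ (Complex.exp (θ * Complex.I)) = 1 := by
  rw [dirProj_apply, ← Complex.exp_add, neg_mul, add_neg_cancel, Complex.exp_zero, one_re]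

lemma le_dirWidth {S : Set ℂ} {θ : ℝ} {z w : ℂ} (hz : z ∈ S) (hw : w ∈ S) :
    ((dirProj θ z - dirProj θ w : ℝ) : EReal) ≤ dirWidth S θ := by
  rw [← map_sub]
  exact le_iSup₂_of_le z hz (le_iSup₂_of_le w hw le_rfl)

lemma dirWidth_le {S : Set ℂ} {θ c : ℝ}
    (h : ∀ z ∈ S, ∀ w ∈ S, dirProj θ z - dirProj θ w ≤ c) : dirWidth S θ ≤ c :=
  iSup₂_le fun z hz => iSup₂_le fun w hw => by
    rw [← dirProj_apply, map_sub]
    exact_mod_cast h z hz w hw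

lemma dirWidth_mono {S T : Set ℂ} (hST : S ⊆ T) (θ : ℝ) : dirWidth S θ ≤ dirWidth T θ :=
  iSup₂_le fun z hz => iSup₂_le fun w hw => by
    simpa only [← dirProj_apply, map_sub] using le_dirWidth (θ := θ) (hST hz) (hST hw)

lemma IsCompact.exists_isOpen_convex_superset_dirWidth_le {K : Set ℂ} (hK : IsCompact K)
    {θ b : ℝ} (hw : dirWidth K θ < b) :
    ∃ W, IsOpen W ∧ Convex ℝ W ∧ K ⊆ W ∧ dirWidth W θ ≤ b := by
  rcases K.eq_empty_or_nonempty with rfl | hne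
  · exact ⟨∅, isOpen_empty, convex_empty, subset_rfl, dirWidth_le (by simp)⟩
  obtain ⟨zM, hzM, hmax⟩ := hK.exists_isMaxOn hne (continuous_dirProj θ).continuousOn
  obtain ⟨zm, hzm, hmin⟩ := hK.exists_isMinOn hne (continuous_dirProj θ).continuousOn
  have hMm : dirProj θ zM - dirProj θ zm < b :=
    EReal.coe_lt_coe_iff.1 ((le_dirWidth hzM hzm).trans_lt hw)
  set a := (dirProj θ zM + dirProj θ zm - b) / 2 with ha
  refine ⟨dirProj θ ⁻¹' Ioo a (a + b), isOpen_Ioo.preimage (continuous_dirProj θ),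
    (convex_Ioo a (a + b)).linear_preimage _, fun z hz => ⟨?_, ?_⟩,
    dirWidth_le fun z hz w hw => ?_⟩
  · linarith [show dirProj θ zm ≤ dirProj θ z from hmin hz]
  · linarith [show dirProj θ z ≤ dirProj θ zM from hmax hz]
  · linarith [hz.2, hw.1]

lemma IsCompact.dirWidth_lt_of_subset {K D : Set ℂ} (hK : IsCompact K) (hD : IsOpen D)
    (hKD : K ⊆ D) {θ b : ℝ} (hDw : dirWidth D θ ≤ b) : dirWidth K θ < b := by
  obtain ⟨δ, hδ, hδD⟩ := hK.exists_thickening_subset_open hD hKD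
  have hmem : ∀ z ∈ K, ∀ u : ℂ, ‖u‖ < δ → z + u ∈ D := fun z hz u hu =>
    hδD (Metric.ball_subset_thickening hz δ (by simpa [dist_eq_norm] using hu))
  set u : ℂ := (δ / 2) • Complex.exp (θ * Complex.I)
  have hu : ‖u‖ < δ := by
    rw [norm_smul, Complex.norm_exp_ofReal_mul_I, Real.norm_of_nonneg (by positivity)]
    linarith
  refine (dirWidth_le (c := b - δ) fun z hz w hw => ?_).trans_lt
    (EReal.coe_lt_coe_iff.2 (by linarith))
  have := EReal.coe_le_coe_iff.1 <|
    (le_dirWidth (θ := θ) (hmem z hz u hu) (hmem w hw (-u) (by rwa [norm_neg]))).trans hDw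
  rw [map_add, map_add, map_neg, map_smul, dirProj_exp_mul_I, smul_eq_mul] at this
  linarith

lemma closure_convexHull_subset_of_isCompact {E : Type*} [NormedAddCommGroup E]
    [NormedSpace ℝ E] {K D : Set E} (hK : IsCompact K) (hD : IsOpen D) (hDc : Convex ℝ D)
    (hKD : K ⊆ D) : closure (convexHull ℝ K) ⊆ D := by
  obtain ⟨δ, hδ, hδD⟩ := hK.exists_thickening_subset_open hD hKD
  calc closure (convexHull ℝ K) ⊆ Metric.thickening δ (convexHull ℝ K) :=
        Metric.closure_subset_thickening hδ _
    _ = convexHull ℝ (Metric.thickening δ K) := by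
        rw [← add_ball_zero, ← add_ball_zero, convexHull_add, (convex_ball 0 δ).convexHull_eq]
    _ ⊆ D := convexHull_min hδD hDc

lemma exists_differentiable_near_of_continuousOn_Icc {a b : ℝ} {g : ℝ → ℂ}
    (hg : ContinuousOn g (Icc a b)) {ε : ℝ} (hε : 0 < ε) :
    ∃ G : ℂ → ℂ, Differentiable ℂ G ∧ ∀ t ∈ Icc a b, ‖g t - G t‖ < ε := by
  obtain ⟨P, hP⟩ := exists_polynomial_near_of_continuousOn a b (fun t => (g t).re)
    (continuous_re.comp_continuousOn hg) (ε / 2) (half_pos hε)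
  obtain ⟨Q, hQ⟩ := exists_polynomial_near_of_continuousOn a b (fun t => (g t).im)
    (continuous_im.comp_continuousOn hg) (ε / 2) (half_pos hε)
  refine ⟨fun z => Polynomial.aeval z P + I * Polynomial.aeval z Q,
    P.differentiable_aeval.add ((differentiable_const I).mul Q.differentiable_aeval),
    fun t ht => ?_⟩
  have hPt : Polynomial.aeval (t : ℂ) P = P.eval t := (Polynomial.ofReal_eval P t).symm
  have hQt : Polynomial.aeval (t : ℂ) Q = Q.eval t := (Polynomial.ofReal_eval Q t).symm
  calc ‖g t - (Polynomial.aeval (t : ℂ) P + I * Polynomial.aeval (t : ℂ) Q)‖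
      ≤ |(g t).re - P.eval t| + |(g t).im - Q.eval t| := by
        simpa [hPt, hQt] using norm_le_abs_re_add_abs_im
          (g t - (Polynomial.aeval (t : ℂ) P + I * Polynomial.aeval (t : ℂ) Q))
    _ < ε / 2 + ε / 2 := by
        rw [abs_sub_comm, abs_sub_comm (g t).im]
        exact add_lt_add (hP t ht) (hQ t ht)
    _ = ε := add_halves ε

lemma Convex.exists_subset_line_of_interior_eq_empty {K : Set ℂ} (hKc : Convex ℝ K)
    (hne : K.Nonempty) (hint : interior K = ∅) :
    ∃ p v : ℂ, v ≠ 0 ∧ ∀ z ∈ K, ∃ t : ℝ, z = p + t * v := by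
  obtain ⟨p, hp⟩ := hne
  have hpK : p ∈ affineSpan ℝ K := subset_affineSpan ℝ K hp
  have hW : (affineSpan ℝ K).direction ≠ ⊤ := fun h =>
    (not_nonempty_iff_eq_empty.2 hint) <| hKc.interior_nonempty_iff_affineSpan_eq_top.2 <|
      (AffineSubspace.direction_eq_top_iff_of_nonempty ⟨p, hpK⟩).1 h
  have hfin : Module.finrank ℝ (affineSpan ℝ K).direction ≤ 1 := by
    have := Submodule.finrank_lt hW
    rw [Complex.finrank_real_complex] at this
    omega
  obtain ⟨v₀, hv₀⟩ := ((Submodule.finrank_le_one_iff_isPrincipal _).1 hfin).principal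
  -- `v₀ = 0` when `K` is a single point
  set v : ℂ := if v₀ = 0 then 1 else v₀
  have hv : v ≠ 0 := by unfold v; split_ifs <;> simp_all
  have hWv : (affineSpan ℝ K).direction ≤ ℝ ∙ v := by
    rw [hv₀]; unfold v; split_ifs with h <;> simp [h]
  refine ⟨p, v, hv, fun z hz => ?_⟩
  obtain ⟨t, ht⟩ := Submodule.mem_span_singleton.1 <|
    hWv (AffineSubspace.vsub_mem_direction (subset_affineSpan ℝ K hz) hpK)
  refine ⟨t, ?_⟩
  rw [vsub_eq_sub, real_smul] at ht
  linear_combination -ht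

lemma IsCompact.exists_differentiable_near_of_subset_line {K : Set ℂ} (hK : IsCompact K)
    (hKc : IsPreconnected K) (hne : K.Nonempty) {p v : ℂ} (hv : v ≠ 0)
    (hline : ∀ z ∈ K, ∃ t : ℝ, z = p + t * v) {f : ℂ → ℂ} (hf : ContinuousOn f K)
    {ε : ℝ} (hε : 0 < ε) :
    ∃ F : ℂ → ℂ, Differentiable ℂ F ∧ ∀ z ∈ K, ‖f z - F z‖ < ε := by
  set τ : ℂ → ℝ := fun z => ((z - p) / v).re
  have hτ : Continuous τ := by fun_prop
  have hτK : ∀ z ∈ K, p + τ z * v = z ∧ (τ z : ℂ) = (z - p) / v := by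
    intro z hz
    obtain ⟨t, rfl⟩ := hline z hz
    have ht : (p + t * v - p) / v = t := by rw [add_sub_cancel_left, mul_div_cancel_right₀ _ hv]
    simp only [τ, ht, ofReal_re, and_self]
  obtain ⟨a, b, hab⟩ : ∃ a b, τ '' K = Icc a b :=
    ⟨_, _, eq_Icc_of_connected_compact ⟨hne.image τ, hKc.image τ hτ.continuousOn⟩
      (hK.image hτ)⟩
  have hg : ContinuousOn (fun t : ℝ => f (p + t * v)) (Icc a b) := by
    rw [← hab]
    refine hf.comp (by fun_prop) ?_
    rintro _ ⟨z, hz, rfl⟩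
    simpa only [(hτK z hz).1] using hz
  obtain ⟨G, hGd, hG⟩ := exists_differentiable_near_of_continuousOn_Icc hg hε
  refine ⟨fun z => G ((z - p) / v), hGd.comp (by fun_prop), fun z hz => ?_⟩
  have := hG (τ z) (hab ▸ mem_image_of_mem τ hz)
  rwa [(hτK z hz).1, (hτK z hz).2] at this

lemma IsCompact.exists_differentiableOn_near_of_mem_interior {K : Set ℂ} (hK : IsCompact K)
    (hKc : Convex ℝ K) {z₀ : ℂ} (hz₀ : z₀ ∈ interior K) {f : ℂ → ℂ} (hf : ContinuousOn f K)
    (hfd : DifferentiableOn ℂ f (interior K)) {ε : ℝ} (hε : 0 < ε) :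
    ∃ U, IsOpen U ∧ Convex ℝ U ∧ K ⊆ U ∧
      ∃ F : ℂ → ℂ, DifferentiableOn ℂ F U ∧ ∀ z ∈ K, ‖f z - F z‖ < ε := by
  obtain ⟨δ, hδ, hfδ⟩ :=
    Metric.uniformContinuousOn_iff.1 (hK.uniformContinuousOn_of_continuous hf) ε hε
  obtain ⟨R, hR⟩ := hK.isBounded.subset_closedBall z₀
  have hR0 : 0 ≤ R := by simpa using hR (interior_subset hz₀)
  set σ : ℝ := δ / (R + δ + 1)
  have hσ0 : 0 < σ := by positivity
  have hσ1 : σ < 1 := (div_lt_one (by positivity)).2 (by linarith)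
  have hσR : σ * R < δ := by
    rw [div_mul_eq_mul_div, div_lt_iff₀ (by positivity)]
    nlinarith
  -- `h` maps `K` into `interior K`, moving each point by at most `σ * R < δ`
  set h := AffineMap.homothety z₀ (1 - σ)
  have hhK : ∀ z ∈ K, h z ∈ interior K := fun z hz => by
    convert hKc.combo_interior_self_mem_interior hz₀ hz (b := 1 - σ) hσ0 (by linarith)
      (by ring) using 1
    simp only [h, AffineMap.homothety_apply, vsub_eq_sub, vadd_eq_add]
    module
  have hhd : Differentiable ℂ h := by
    have : (h : ℂ → ℂ) = fun z => ((1 - σ : ℝ) : ℂ) * (z - z₀) + z₀ := by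
      ext z
      simp [h, AffineMap.homothety_apply, real_smul]
    rw [this]
    fun_prop
  refine ⟨h ⁻¹' interior K, isOpen_interior.preimage (AffineMap.homothety_continuous z₀ _),
    hKc.interior.affine_preimage h, hhK, f ∘ h, hfd.comp hhd.differentiableOn fun _ hz => hz,
    fun z hz => ?_⟩
  have hdist : dist z (h z) < δ := by
    rw [dist_self_homothety, sub_sub_cancel, Real.norm_of_nonneg hσ0.le]
    calc σ * dist z₀ z ≤ σ * R := by
          gcongr
          simpa [dist_comm] using hR hz
      _ < δ := hσR
  simpa [dist_eq_norm] using hfδ z hz (h z) (interior_subset (hhK z hz)) hdist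

lemma IsCompact.exists_differentiableOn_near_of_convex {K : Set ℂ} (hK : IsCompact K)
    (hKc : Convex ℝ K) (hne : K.Nonempty) {f : ℂ → ℂ} (hf : ContinuousOn f K)
    (hfd : DifferentiableOn ℂ f (interior K)) {ε : ℝ} (hε : 0 < ε) :
    ∃ U, IsOpen U ∧ Convex ℝ U ∧ K ⊆ U ∧
      ∃ F : ℂ → ℂ, DifferentiableOn ℂ F U ∧ ∀ z ∈ K, ‖f z - F z‖ < ε := by
  rcases (interior K).eq_empty_or_nonempty with hint | ⟨z₀, hz₀⟩
  · obtain ⟨p, v, hv, hline⟩ := hKc.exists_subset_line_of_interior_eq_empty hne hint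
    obtain ⟨F, hFd, hF⟩ :=
      hK.exists_differentiable_near_of_subset_line hKc.isPreconnected hne hv hline hf hε
    exact ⟨univ, isOpen_univ, convex_univ, subset_univ K, F, hFd.differentiableOn, hF⟩
  · exact hK.exists_differentiableOn_near_of_mem_interior hKc hz₀ hf hfd hε

lemma completeCK_of_forall_completeHol {F : Set (ℂ → ℂ)} {θ b : ℝ}
    (H : ∀ D : Set ℂ, IsOpen D → Convex ℝ D → D.Nonempty → dirWidth D θ ≤ b → CompleteHol F D)
    {K : Set ℂ} (hK : IsCompact K) (hKc : Convex ℝ K) (hKw : dirWidth K θ < b) :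
    CompleteCK F K := by
  intro f hf hfd ε hε
  rcases K.eq_empty_or_nonempty with rfl | hne
  · exact ⟨0, zero_mem _, by simp⟩
  obtain ⟨W, hWo, hWc, hKW, hWw⟩ := hK.exists_isOpen_convex_superset_dirWidth_le hKw
  obtain ⟨U, hUo, hUc, hKU, φ, hφd, hφ⟩ :=
    hK.exists_differentiableOn_near_of_convex hKc hne hf hfd (half_pos hε)
  obtain ⟨g, hg, hφg⟩ := H (U ∩ W) (hUo.inter hWo) (hUc.inter hWc)
    (hne.mono (subset_inter hKU hKW)) ((dirWidth_mono inter_subset_right θ).trans hWw) φ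
    (hφd.mono inter_subset_left) K (subset_inter hKU hKW) hK (ε / 2) (half_pos hε)
  refine ⟨g, hg, fun z hz => ?_⟩
  calc ‖f z - g z‖ ≤ ‖f z - φ z‖ + ‖φ z - g z‖ := norm_sub_le_norm_sub_add_norm_sub _ _ _
    _ < ε / 2 + ε / 2 := add_lt_add (hφ z hz) (hφg z hz)
    _ = ε := add_halves ε

lemma completeHol_of_forall_completeCK {F : Set (ℂ → ℂ)} {θ b : ℝ}
    (H : ∀ K : Set ℂ, IsCompact K → Convex ℝ K → dirWidth K θ < b → CompleteCK F K)
    {D : Set ℂ} (hDo : IsOpen D) (hDc : Convex ℝ D) (hDw : dirWidth D θ ≤ b) :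
    CompleteHol F D := by
  intro f hf K hKD hK ε hε
  have hK'D : closure (convexHull ℝ K) ⊆ D :=
    closure_convexHull_subset_of_isCompact hK hDo hDc hKD
  have hK' : IsCompact (closure (convexHull ℝ K)) :=
    (isBounded_convexHull.2 hK.isBounded).isCompact_closure
  obtain ⟨g, hg, hfg⟩ := H _ hK' (convex_convexHull ℝ K).closure
    (hK'.dirWidth_lt_of_subset hDo hK'D hDw) f (hf.continuousOn.mono hK'D)
    (hf.mono (interior_subset.trans hK'D)) ε hε
  exact ⟨g, hg, fun z hz => hfg z (subset_closure (subset_convexHull ℝ K hz))⟩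

theorem stmt0_general (b : ℝ) (θ : ℝ) (Z : ℕ → ℂ) :
    (∀ D : Set ℂ, IsOpen D → Convex ℝ D → D.Nonempty →
        dirWidth D θ ≤ (b : EReal) → CompleteHol (expSystem Z) D) ↔
    (∀ K : Set ℂ, IsCompact K → Convex ℝ K →
        dirWidth K θ < (b : EReal) → CompleteCK (expSystem Z) K) :=
  ⟨fun H _ hK hKc hKw => completeCK_of_forall_completeHol H hK hKc hKw,
    fun H _ hDo hDc _ hDw => completeHol_of_forall_completeCK H hDo hDc hDw⟩

/-- Theorem 1, I ⇔ II: completeness of `Exp^Z` in `Hol(D)` for every convex domain of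
width `≤ b` in direction `θ` is equivalent to completeness in `C(K) ∩ Hol(int K)` for
every convex compact set of width `< b` in direction `θ`. -/
theorem stmt0 (b : ℝ) (hb : 0 < b) (θ : ℝ) (Z : ℕ → ℂ) :
    (∀ D : Set ℂ, IsOpen D → Convex ℝ D → D.Nonempty →
        dirWidth D θ ≤ (b : EReal) → CompleteHol (expSystem Z) D) ↔
    (∀ K : Set ℂ, IsCompact K → Convex ℝ K →
        dirWidth K θ < (b : EReal) → CompleteCK (expSystem Z) K) :=
  stmt0_general b θ Z

end
end

section
/- Let Z = (z_n) be a sequence of pairwise distinct complex numbers that is separated, i.e., inf{|z_n − z_m| : n ≠ m} > 0, and that lies entirely in a closed horizontal strip S̄_{b/2} = {z ∈ ℂ : |Im z| ≤ b/2} of finite width b ∈ ℝ≥0. Then Z has finite Redheffer exterior density: there exist c ∈ ℝ≥0 and pairwise distinct integers m_n ∈ ℤ with Σ_n |1/z_n − c/m_n| < +∞ (where any z_n = 0 is excluded from the sum, or Z is assumed to consist of nonzero numbers). -/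
open Complex Filter Set
open scoped ENNReal ENat

noncomputable section

/-!
Cover the plane by a grid of squares of side `δ / 2`, where `δ` is the separation constant: each
square contains at most one `z_n`, and a strip of width `b` meets only a bounded number `2K` of rows.
Numbering the squares row by row inside each column gives an injective integer sequence `m_n` with
`m_n − c z_n` bounded for a suitable `c > 0`; then `|1/z_n − c/m_n| = O(1/m_n²)`, which is summable
over distinct integers.
-/

lemma norm_one_div_sub_div_le {z w : ℂ} {c B : ℝ} (hc : 0 < c) (hz : z ≠ 0) (hw : w ≠ 0)
    (hB : ‖w - c * z‖ ≤ B) (hwB : 2 * B ≤ ‖w‖) :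
    ‖1 / z - c / w‖ ≤ 2 * B * c / ‖w‖ ^ 2 := by
  have hcz : ‖w‖ / 2 ≤ c * ‖z‖ := by
    have := norm_sub_norm_le w (w - c * z)
    rw [sub_sub_cancel, norm_mul, Complex.norm_of_nonneg hc.le] at this
    linarith
  have hzw : ‖w‖ ^ 2 / (2 * c) ≤ ‖z‖ * ‖w‖ := by
    rw [div_le_iff₀ (by positivity)]
    nlinarith [norm_nonneg w]
  calc ‖1 / z - c / w‖ = ‖w - c * z‖ / (‖z‖ * ‖w‖) := by
        rw [div_sub_div _ _ hz hw, norm_div, norm_mul, one_mul, mul_comm (c : ℂ)]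
    _ ≤ B / (‖w‖ ^ 2 / (2 * c)) := div_le_div₀ (le_trans (norm_nonneg _) hB) hB (by positivity) hzw
    _ = 2 * B * c / ‖w‖ ^ 2 := by field_simp

theorem hasFinRedheffer_of_norm_intCast_sub_le {ι : Type*} {w : ι → ℂ} (hw : ∀ i, w i ≠ 0)
    {c : ℝ} (hc : 0 < c) {m : ι → ℤ} (hm : Function.Injective m) {B : ℝ}
    (hB : ∀ i, ‖(m i : ℂ) - c * w i‖ ≤ B) :
    HasFinRedheffer w := by
  refine ⟨c, hc.le, m, hm, ?_⟩
  have hsum : Summable fun i => 2 * B * c * (1 / (m i : ℝ) ^ 2) :=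
    ((Real.summable_one_div_int_pow.mpr one_lt_two).comp_injective hm).mul_left _
  refine hsum.of_norm_bounded_eventually ?_
  have hlarge : ∀ᶠ i in cofinite, 2 * B ≤ ‖(m i : ℂ)‖ ∧ (m i : ℂ) ≠ 0 := by
    have hnorm : Tendsto (fun i => ‖(m i : ℝ)‖) cofinite atTop :=
      tendsto_norm_cocompact_atTop.comp (Int.tendsto_coe_cofinite.comp hm.tendsto_cofinite)
    filter_upwards [hnorm.eventually_ge_atTop (max (2 * B) 1)] with i hi
    rw [Real.norm_eq_abs, max_le_iff] at hi
    refine ⟨by rw [Complex.norm_intCast]; exact hi.1, Int.cast_ne_zero.mpr fun h0 => ?_⟩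
    norm_num [h0] at hi
  filter_upwards [hlarge] with i ⟨hi, hi0⟩
  rw [norm_norm]
  calc ‖1 / w i - c / m i‖ ≤ 2 * B * c / ‖(m i : ℂ)‖ ^ 2 :=
        norm_one_div_sub_div_le hc (hw i) hi0 (hB i) hi
    _ = 2 * B * c * (1 / (m i : ℝ) ^ 2) := by
        rw [Complex.norm_intCast, sq_abs, mul_one_div]

lemma norm_sub_lt_of_floor_eq {s : ℝ} (hs : 0 < s) {z w : ℂ}
    (hre : ⌊s * z.re⌋ = ⌊s * w.re⌋) (him : ⌊s * z.im⌋ = ⌊s * w.im⌋) :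
    ‖z - w‖ < 2 / s := by
  have hre' := Int.abs_sub_lt_one_of_floor_eq_floor hre
  have him' := Int.abs_sub_lt_one_of_floor_eq_floor him
  rw [← mul_sub, abs_mul, abs_of_pos hs] at hre' him'
  calc ‖z - w‖ ≤ |z.re - w.re| + |z.im - w.im| := by
        simpa using Complex.norm_le_abs_re_add_abs_im (z - w)
    _ < 2 / s := by rw [lt_div_iff₀ hs]; linarith

lemma abs_floor_lt_of_abs_add_one_le {x : ℝ} {K : ℕ} (hK : |x| + 1 ≤ K) :
    |⌊x⌋| < (K : ℤ) := by
  have h1 : (⌊x⌋ : ℝ) < K := by linarith [Int.floor_le x, le_abs_self x]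
  have h2 : -(K : ℝ) < ⌊x⌋ := by linarith [Int.lt_floor_add_one x, neg_abs_le x]
  rw [abs_lt]
  exact ⟨by exact_mod_cast h2, by exact_mod_cast h1⟩

lemma eq_and_eq_of_mul_add_eq {N a a' j j' : ℤ} (hj : |j' - j| < N)
    (h : N * a + j = N * a' + j') : a = a' ∧ j = j' := by
  have hdvd : N ∣ j' - j := ⟨a - a', by linarith⟩
  have hjj : j = j' := by linarith [Int.eq_zero_of_abs_lt_dvd hdvd hj]
  have hN : N ≠ 0 := by rintro rfl; linarith [abs_nonneg (j' - j)]
  exact ⟨mul_left_cancel₀ hN (by linarith), hjj⟩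

/-- The number of the square of side `1 / s` containing `z` (closed on the left and bottom), when
the squares are numbered column by column, `2K` per column. -/
def gridIndex (s : ℝ) (K : ℕ) (z : ℂ) : ℤ := 2 * K * ⌊s * z.re⌋ + ⌊s * z.im⌋

section gridIndex

variable {s : ℝ} {K : ℕ} {z w : ℂ}

lemma norm_sub_lt_of_gridIndex_eq (hs : 0 < s) (hz : |s * z.im| + 1 ≤ K)
    (hw : |s * w.im| + 1 ≤ K) (h : gridIndex s K z = gridIndex s K w) : ‖z - w‖ < 2 / s := by
  have hz' := abs_floor_lt_of_abs_add_one_le hz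
  have hw' := abs_floor_lt_of_abs_add_one_le hw
  have hrow : |⌊s * w.im⌋ - ⌊s * z.im⌋| < 2 * K := by
    have := abs_sub ⌊s * w.im⌋ ⌊s * z.im⌋
    linarith
  obtain ⟨hre, him⟩ := eq_and_eq_of_mul_add_eq hrow h
  exact norm_sub_lt_of_floor_eq hs hre him

lemma norm_gridIndex_sub_le (hz : |s * z.im| + 1 ≤ K) :
    ‖(gridIndex s K z : ℂ) - (2 * K * s : ℝ) * z‖ ≤ 3 * K + 2 * K ^ 2 := by
  have hfloor : |(⌊s * z.im⌋ : ℝ)| < K := by exact_mod_cast abs_floor_lt_of_abs_add_one_le hz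
  have hfrac : |(⌊s * z.re⌋ : ℝ) - s * z.re| ≤ 1 := by
    rw [abs_sub_comm, abs_of_nonneg (sub_nonneg.mpr (Int.floor_le _))]
    linarith [Int.lt_floor_add_one (s * z.re)]
  have hK : (0 : ℝ) ≤ K := K.cast_nonneg
  have hre : |((gridIndex s K z : ℂ) - (2 * K * s : ℝ) * z).re| ≤ 3 * K := by
    have : ((gridIndex s K z : ℂ) - (2 * K * s : ℝ) * z).re
        = 2 * K * ((⌊s * z.re⌋ : ℝ) - s * z.re) + ⌊s * z.im⌋ := by
      simp [gridIndex]; ring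
    rw [this]
    calc _ ≤ |2 * K * ((⌊s * z.re⌋ : ℝ) - s * z.re)| + |(⌊s * z.im⌋ : ℝ)| := abs_add_le _ _
      _ ≤ 2 * K * 1 + K := by
          rw [abs_mul, abs_of_nonneg (by positivity)]
          gcongr
      _ = 3 * K := by ring
  have him : |((gridIndex s K z : ℂ) - (2 * K * s : ℝ) * z).im| ≤ 2 * K ^ 2 := by
    have : ((gridIndex s K z : ℂ) - (2 * K * s : ℝ) * z).im = -(2 * K * (s * z.im)) := by
      simp; ring
    rw [this, abs_neg, abs_mul, abs_of_nonneg (by positivity)]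
    nlinarith [abs_nonneg (s * z.im)]
  linarith [Complex.norm_le_abs_re_add_abs_im ((gridIndex s K z : ℂ) - (2 * K * s : ℝ) * z)]

end gridIndex

theorem stmt14_general (b : ℝ) (Z : ℕ → ℂ) (hne : ∀ n, Z n ≠ 0)
    (hsep : ∃ δ : ℝ, 0 < δ ∧ ∀ n m : ℕ, n ≠ m → δ ≤ ‖Z n - Z m‖)
    (hstrip : ∀ n, Z n ∈ closedStrip b) :
    HasFinRedheffer Z := by
  obtain ⟨δ, hδ, hsep⟩ := hsep
  obtain ⟨K, hK⟩ := exists_nat_ge (b / δ + 1)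
  have hs : 0 < 2 / δ := by positivity
  have hrow : ∀ n, |2 / δ * (Z n).im| + 1 ≤ K := fun n => by
    have : |(Z n).im| ≤ b / 2 := hstrip n
    rw [abs_mul, abs_of_pos hs]
    calc 2 / δ * |(Z n).im| + 1 ≤ 2 / δ * (b / 2) + 1 := by gcongr
      _ = b / δ + 1 := by ring
      _ ≤ K := hK
  have hK0 : (0 : ℝ) < K := by linarith [abs_nonneg (2 / δ * (Z 0).im), hrow 0]
  refine hasFinRedheffer_of_norm_intCast_sub_le hne (by positivity : (0 : ℝ) < 2 * K * (2 / δ))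
    (m := fun n => gridIndex (2 / δ) K (Z n)) ?_ fun n => norm_gridIndex_sub_le (hrow n)
  intro n m h
  by_contra hnm
  have := norm_sub_lt_of_gridIndex_eq hs (hrow n) (hrow m) h
  rw [div_div_cancel₀ two_ne_zero] at this
  exact (hsep n m hnm).not_gt this

/-- A separated sequence of pairwise distinct nonzero complex numbers lying in a closed
horizontal strip of finite width `b` has finite Redheffer exterior density. -/
theorem stmt14 (b : ℝ) (hb : 0 ≤ b) (Z : ℕ → ℂ) (hne : ∀ n, Z n ≠ 0)
    (hinj : Function.Injective Z)
    (hsep : ∃ δ : ℝ, 0 < δ ∧ ∀ n m : ℕ, n ≠ m → δ ≤ ‖Z n - Z m‖)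
    (hstrip : ∀ n, Z n ∈ closedStrip b) :
    HasFinRedheffer Z :=
  stmt14_general b Z hne hsep hstrip

end
end
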